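/- arXiv:2602.19344 — 4 statements merged into one kernel-verified Lean document; each statement's English description precedes it below -/
import Mathlib

section
/- Let $X$ be a topological space and let $C \subseteq D \subseteq X$ be subsets. Define $C_0 = \overline{C} \setminus \overline{\overline{C} \setminus C}$ and $D_0 = \overline{D} \setminus \overline{\overline{D} \setminus D}$. Then $C_0 \setminus D_0 \subseteq \overline{D \setminus C}$ and $D_0 \setminus C_0 \subseteq \overline{D \setminus C}$. -/
theorem stmt3 {X : Type*} [TopologicalSpace X] (C D : Set X) (hCD : C ⊆ D) :
    (closure C \ closure (closure C \ C)) \ (closure D \ closure (closure D \ D))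
        ⊆ closure (D \ C) ∧
      (closure D \ closure (closure D \ D)) \ (closure C \ closure (closure C \ C))
        ⊆ closure (D \ C) := by
  have hD : closure D = closure (D \ C) ∪ closure C := by
    rw [← closure_union, Set.diff_union_of_subset hCD]
  constructor
  · rintro x ⟨⟨hxC, hxC2⟩, hx⟩
    have hxD : x ∈ closure D := closure_mono hCD hxC
    have hxD2 : x ∈ closure (closure D \ D) := by
      by_contra h
      exact hx ⟨hxD, h⟩
    have hsub : closure D \ D ⊆ closure (D \ C) ∪ (closure C \ C) := by
      rintro y ⟨hy1, hy2⟩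
      rw [hD] at hy1
      rcases hy1 with h | h
      · exact Or.inl h
      · exact Or.inr ⟨h, fun hc => hy2 (hCD hc)⟩
    have h2 := closure_mono hsub hxD2
    rw [closure_union, closure_closure] at h2
    rcases h2 with h | h
    · exact h
    · exact absurd h hxC2
  · rintro x ⟨⟨hxD, hxD2⟩, hx⟩
    by_cases hxC : x ∈ closure C
    · have hxC2 : x ∈ closure (closure C \ C) := by
        by_contra h
        exact hx ⟨hxC, h⟩
      have hsub : closure C \ C ⊆ (closure D \ D) ∪ (D \ C) := by
        rintro y ⟨hy1, hy2⟩
        by_cases hyD : y ∈ D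
        · exact Or.inr ⟨hyD, hy2⟩
        · exact Or.inl ⟨closure_mono hCD hy1, hyD⟩
      have h2 := closure_mono hsub hxC2
      rw [closure_union] at h2
      rcases h2 with h | h
      · exact absurd h hxD2
      · exact h
    · rw [hD] at hxD
      exact hxD.resolve_right hxC
end

section
/- Let $X$ be a topological space and let $C, D \subseteq X$ be subsets. Define $C_0 = \overline{C} \setminus \overline{\overline{C} \setminus C}$ and $D_0 = \overline{D} \setminus \overline{\overline{D} \setminus D}$. Then $(C_0 \setminus D_0) \cup (D_0 \setminus C_0) \subseteq \overline{C \setminus D} \cup \overline{D \setminus C}$. -/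
open Set

lemma stmt4_aux {X : Type*} [TopologicalSpace X] {E C : Set X} (h : E ⊆ C) :
    ((closure C \ closure (closure C \ C)) \ (closure E \ closure (closure E \ E)))
      ∪ ((closure E \ closure (closure E \ E)) \ (closure C \ closure (closure C \ C)))
      ⊆ closure (C \ E) := by
  rintro x (⟨⟨hxC, hxCC⟩, hxE⟩ | ⟨⟨hxE, hxEE⟩, hxC⟩)
  · by_cases hE : x ∈ closure E
    · have hEE : x ∈ closure (closure E \ E) := by
        by_contra hcon
        exact hxE ⟨hE, hcon⟩
      rw [mem_closure_iff] at hxCC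
      push_neg at hxCC
      obtain ⟨U, hU, hxU, hUe⟩ := hxCC
      rw [mem_closure_iff]
      intro o ho hxo
      obtain ⟨y, ⟨hyo, hyU⟩, hyE, hyNE⟩ :=
        mem_closure_iff.mp hEE (o ∩ U) (ho.inter hU) ⟨hxo, hxU⟩
      have hyC : y ∈ C := by
        by_contra hyC
        exact Set.eq_empty_iff_forall_notMem.mp hUe y ⟨hyU, closure_mono h hyE, hyC⟩
      exact ⟨y, hyo, hyC, hyNE⟩
    · rw [mem_closure_iff]
      intro o ho hxo
      obtain ⟨z, ⟨hzo, hzE⟩, hzC⟩ :=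
        mem_closure_iff.mp hxC (o ∩ (closure E)ᶜ) (ho.inter isClosed_closure.isOpen_compl)
          ⟨hxo, hE⟩
      exact ⟨z, hzo, hzC, fun hzE' => hzE (subset_closure hzE')⟩
  · have hC : x ∈ closure C := closure_mono h hxE
    have hCC : x ∈ closure (closure C \ C) := by
      by_contra hcon
      exact hxC ⟨hC, hcon⟩
    rw [mem_closure_iff] at hxEE
    push_neg at hxEE
    obtain ⟨U, hU, hxU, hUe⟩ := hxEE
    rw [mem_closure_iff]
    intro o ho hxo
    obtain ⟨y, ⟨hyo, hyU⟩, hyC, hyNC⟩ :=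
      mem_closure_iff.mp hCC (o ∩ U) (ho.inter hU) ⟨hxo, hxU⟩
    have hyNE : y ∉ closure E := fun hyE =>
      Set.eq_empty_iff_forall_notMem.mp hUe y ⟨hyU, hyE, fun he => hyNC (h he)⟩
    obtain ⟨z, ⟨hzo, hzNE⟩, hzC⟩ :=
      mem_closure_iff.mp hyC (o ∩ (closure E)ᶜ) (ho.inter isClosed_closure.isOpen_compl)
        ⟨hyo, hyNE⟩
    exact ⟨z, hzo, hzC, fun hzE => hzNE (subset_closure hzE)⟩

theorem stmt4 {X : Type*} [TopologicalSpace X] (C D : Set X) :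
    ((closure C \ closure (closure C \ C)) \ (closure D \ closure (closure D \ D)))
        ∪ ((closure D \ closure (closure D \ D)) \ (closure C \ closure (closure C \ C)))
      ⊆ closure (C \ D) ∪ closure (D \ C) := by
  set E := C ∩ D with hE
  have hEC : E ⊆ C := Set.inter_subset_left
  have hED : E ⊆ D := Set.inter_subset_right
  have h1 : C \ E = C \ D := by simp [hE, Set.diff_self_inter]
  have h2 : D \ E = D \ C := by
    ext y; simp only [hE, Set.mem_diff, Set.mem_inter_iff]; tauto
  rintro x (⟨hxC, hxD⟩ | ⟨hxD, hxC⟩)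
  · by_cases hx : x ∈ closure E \ closure (closure E \ E)
    · right
      rw [← h2]
      exact stmt4_aux hED (Or.inr ⟨hx, hxD⟩)
    · left
      rw [← h1]
      exact stmt4_aux hEC (Or.inl ⟨hxC, hx⟩)
  · by_cases hx : x ∈ closure E \ closure (closure E \ E)
    · left
      rw [← h1]
      exact stmt4_aux hEC (Or.inr ⟨hx, hxC⟩)
    · right
      rw [← h2]
      exact stmt4_aux hED (Or.inl ⟨hxD, hx⟩)
end

section
/- Let $X$ be a topological space and let $C, D \subseteq X$. With $C_0 = \overline{C} \setminus \overline{\overline{C} \setminus C}$ and $D_0 = \overline{D} \setminus \overline{\overline{D} \setminus D}$, set $C' = C \setminus C_0$ and $D' = D \setminus D_0$. Then $\overline{C' \setminus D'} \cup \overline{D' \setminus C'} \subseteq \overline{C \setminus D} \cup \overline{D \setminus C}$. -/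
open Set

private lemma closure_agree5 {X : Type*} [TopologicalSpace X] {U A B : Set X}
    (hU : IsOpen U) (h : A ∩ U = B ∩ U) : closure A ∩ U = closure B ∩ U := by
  have key : ∀ P Q : Set X, P ∩ U = Q ∩ U → closure P ∩ U ⊆ closure Q ∩ U := by
    rintro P Q hPQ x ⟨hx, hxU⟩
    refine ⟨?_, hxU⟩
    have h1 : x ∈ closure (U ∩ P) := hU.inter_closure ⟨hxU, hx⟩
    rw [inter_comm, hPQ] at h1
    exact closure_mono inter_subset_left h1
  exact subset_antisymm (key A B h) (key B A h.symm)

theorem stmt5 {X : Type*} [TopologicalSpace X] (C D : Set X) :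
    closure ((C \ (closure C \ closure (closure C \ C))) \
          (D \ (closure D \ closure (closure D \ D))))
        ∪ closure ((D \ (closure D \ closure (closure D \ D))) \
          (C \ (closure C \ closure (closure C \ C))))
      ⊆ closure (C \ D) ∪ closure (D \ C) := by
  set E := closure (C \ D) ∪ closure (D \ C) with hE
  have hEc : IsClosed E := isClosed_closure.union isClosed_closure
  set U := Eᶜ with hUdef
  have hU : IsOpen U := hEc.isOpen_compl
  have h0 : C ∩ U = D ∩ U := by
    ext x
    simp only [mem_inter_iff, hUdef, mem_compl_iff, hE, mem_union, not_or]
    constructor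
    · rintro ⟨hxC, hE1, hE2⟩
      refine ⟨?_, hE1, hE2⟩
      by_contra hxD
      exact hE1 (subset_closure ⟨hxC, hxD⟩)
    · rintro ⟨hxD, hE1, hE2⟩
      refine ⟨?_, hE1, hE2⟩
      by_contra hxC
      exact hE2 (subset_closure ⟨hxD, hxC⟩)
  have e0 : ∀ x ∈ U, (x ∈ C ↔ x ∈ D) := by
    intro x hx
    have := Set.ext_iff.mp h0 x
    simp only [mem_inter_iff, hx, and_true] at this
    exact this
  have h1 := closure_agree5 hU h0
  have e1 : ∀ x ∈ U, (x ∈ closure C ↔ x ∈ closure D) := by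
    intro x hx
    have := Set.ext_iff.mp h1 x
    simp only [mem_inter_iff, hx, and_true] at this
    exact this
  have h2 : (closure C \ C) ∩ U = (closure D \ D) ∩ U := by
    ext x
    simp only [mem_inter_iff, mem_diff]
    constructor
    · rintro ⟨⟨ha, hb⟩, hx⟩
      exact ⟨⟨(e1 x hx).mp ha, fun hd => hb ((e0 x hx).mpr hd)⟩, hx⟩
    · rintro ⟨⟨ha, hb⟩, hx⟩
      exact ⟨⟨(e1 x hx).mpr ha, fun hd => hb ((e0 x hx).mp hd)⟩, hx⟩
  have h3 := closure_agree5 hU h2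
  have e3 : ∀ x ∈ U, (x ∈ closure (closure C \ C) ↔ x ∈ closure (closure D \ D)) := by
    intro x hx
    have := Set.ext_iff.mp h3 x
    simp only [mem_inter_iff, hx, and_true] at this
    exact this
  have e4 : ∀ x ∈ U,
      (x ∈ C \ (closure C \ closure (closure C \ C)) ↔
       x ∈ D \ (closure D \ closure (closure D \ D))) := by
    intro x hx
    simp only [mem_diff]
    constructor
    · rintro ⟨ha, hb⟩
      refine ⟨(e0 x hx).mp ha, fun ⟨hc, hd⟩ => hb ⟨(e1 x hx).mpr hc, fun h => hd ((e3 x hx).mp h)⟩⟩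
    · rintro ⟨ha, hb⟩
      refine ⟨(e0 x hx).mpr ha, fun ⟨hc, hd⟩ => hb ⟨(e1 x hx).mp hc, fun h => hd ((e3 x hx).mpr h)⟩⟩
  have s1 : (C \ (closure C \ closure (closure C \ C))) \
      (D \ (closure D \ closure (closure D \ D))) ⊆ E := by
    rintro x ⟨ha, hb⟩
    by_contra hx
    exact hb ((e4 x hx).mp ha)
  have s2 : (D \ (closure D \ closure (closure D \ D))) \
      (C \ (closure C \ closure (closure C \ C))) ⊆ E := by
    rintro x ⟨ha, hb⟩
    by_contra hx
    exact hb ((e4 x hx).mpr ha)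
  exact union_subset (closure_minimal s1 hEc) (closure_minimal s2 hEc)
end

section
/- Let $X$ be a noetherian topological space of finite Krull dimension, and let $C \subseteq X$ be a nonempty subset that contains a dense open subset of its closure $\overline{C}$. Then the topological Krull dimension of $\overline{C} \setminus C$ is strictly less than the topological Krull dimension of $\overline{C}$. -/
/-! Let `V` be the dense open subset of `closure C` contained in `C`. Then `closure C \ C` lies in
the nowhere dense closed set `Vᶜ`, so the closure in `closure C` of an irreducible closed subset
of `closure C \ C` has empty interior. In a noetherian space every irreducible component contains
a nonempty open set, so such a closure is not maximal: every chain of irreducible closed subsets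
of `closure C \ C` extends by one step inside `closure C`, which has finite dimension. -/

open Order TopologicalSpace Topology Set

theorem Order.krullDim_lt_of_strictMono {α β : Type*} [Preorder α] [Preorder β]
    [FiniteDimensionalOrder β] {f : α → β} (hf : StrictMono f) (hmax : ∀ a, ¬IsMax (f a)) :
    krullDim α < krullDim β := by
  rw [krullDim_eq_length_of_finiteDimensionalOrder (α := β), krullDim_lt_coe_iff]
  intro l
  obtain ⟨b, hb⟩ := not_isMax_iff.mp (hmax l.last)
  exact_mod_cast Nat.lt_of_succ_le (LTSeries.longestOf_is_longest ((l.map f hf).snoc b hb))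

namespace TopologicalSpace.IrreducibleCloseds

variable {X : Type*} [TopologicalSpace X]

instance [Nonempty X] : Nonempty (IrreducibleCloseds X) :=
  ⟨⟨closure {Classical.arbitrary X}, isIrreducible_singleton.closure, isClosed_closure⟩⟩

theorem not_isMax_of_interior_eq_empty [NoetherianSpace X] {T : IrreducibleCloseds X}
    (hT : interior (T : Set X) = ∅) : ¬IsMax T := by
  intro hmax
  have hcomp : (T : Set X) ∈ irreducibleComponents X := by
    rw [irreducibleComponents_eq_maximals_closed]
    exact ⟨⟨T.isClosed, T.isIrreducible⟩,
      fun s hs hTs => hmax (show T ≤ ⟨s, hs.2, hs.1⟩ from hTs)⟩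
  obtain ⟨o, ho, hne, hoT⟩ :=
    NoetherianSpace.exists_isOpen_nonempty_subset_irreducibleComponent _ hcomp
  exact hne.ne_empty (subset_empty_iff.mp (hT ▸ ho.subset_interior_iff.mpr hoT))

end TopologicalSpace.IrreducibleCloseds

theorem Topology.IsInducing.topologicalKrullDim_lt {Y Z : Type*} [TopologicalSpace Y]
    [TopologicalSpace Z] [NoetherianSpace Y] [Nonempty Y] (hY : topologicalKrullDim Y ≠ ⊤)
    {f : Z → Y} (hf : IsInducing f) (hnd : IsNowhereDense (range f)) :
    topologicalKrullDim Z < topologicalKrullDim Y := by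
  have : FiniteDimensionalOrder (IrreducibleCloseds Y) :=
    finiteDimensionalOrder_iff_krullDim_ne_bot_and_top.mpr
      ⟨krullDim_ne_bot_iff.mpr inferInstance, hY⟩
  refine krullDim_lt_of_strictMono (IrreducibleCloseds.map_strictMono_of_isInducing hf)
    fun A => IrreducibleCloseds.not_isMax_of_interior_eq_empty ?_
  exact subset_empty_iff.mp <|
    hnd ▸ interior_mono (closure_mono (image_subset_range f A))

theorem stmt7 {X : Type*} [TopologicalSpace X] [TopologicalSpace.NoetherianSpace X]
    (hfin : topologicalKrullDim X < ⊤)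
    (C : Set X) (hC : C.Nonempty)
    (hdense : ∃ U : Set X, U ⊆ C ∧
      IsOpen (Subtype.val ⁻¹' U : Set (closure C)) ∧
      Dense (Subtype.val ⁻¹' U : Set (closure C))) :
    topologicalKrullDim ↥(closure C \ C) < topologicalKrullDim ↥(closure C) := by
  obtain ⟨U, hUC, hUo, hUd⟩ := hdense
  have : Nonempty (closure C) := hC.closure.to_subtype
  have hdim : topologicalKrullDim (closure C) ≠ ⊤ :=
    ((topologicalKrullDim_subspace_le X _).trans_lt hfin).ne
  have hnd : IsNowhereDense (range (inclusion (sdiff_subset : closure C \ C ⊆ closure C))) := by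
    refine (hUo.isClosed_compl.isNowhereDense_iff.mpr hUd.interior_compl).mono ?_
    rintro _ ⟨x, rfl⟩ hxU
    exact x.2.2 (hUC hxU)
  exact (IsEmbedding.inclusion sdiff_subset).isInducing.topologicalKrullDim_lt hdim hnd
end
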